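/- The lead term of tr_B^G(N·e) in the graded reverse lexicographic order with a0 < a1 < a2 < a3 is 2 a3^p a1^3, and the lead term of tr_B^G(N · tr^P(a3^{p−2})) is (2/3) a3^p a2^{p−3} a1. -/

import Mathlib

/-!
Write `ψ` for the substitution `a₀ ↦ 0`. Every coset representative of `B` other than the
identity sends some factor `(a₃)σ_s` of `N` to a multiple of `a₀`, so `ψ(tr_B^G(N·f)) = ψ(N·f)`.
As `a₀` is the smallest variable, a monomial containing `a₀` is grevlex-smaller than every
`a₀`-free monomial of the same degree; hence for homogeneous `f` the polynomials `tr_B^G(N·f)` and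
`N·f` have the same lead term as soon as that of `N·f` is free of `a₀`. Lead terms multiply,
`N` has lead term `a₃^p` and `e` has lead term `2a₁³`. Finally
`tr^P(a₃^{p-2}) = ∑_s (s³a₀ + 3s²a₁ + 3sa₂ + a₃)^{p-2}`, and since `∑_s s^m` vanishes for
`m < p - 1` and equals `-1` for `m = p - 1`, its lead term is
`(p - 2)·3^{p-2}·(-1)·a₂^{p-3}a₁ = (2/3)a₂^{p-3}a₁`.
-/

open MvPolynomial

noncomputable section

/-- The right action of the 2×2 matrix `g` over `F_p` on `F[V] = F[a₃,a₂,a₁,a₀]`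
(with `aᵢ = X i`), given by the dual of the third symmetric power representation. -/
def act (p : ℕ) [Fact p.Prime] (F : Type) [Field F] [CharP F p]
    (g : Matrix (Fin 2) (Fin 2) (ZMod p)) :
    MvPolynomial (Fin 4) F →ₐ[F] MvPolynomial (Fin 4) F :=
  letI c : ZMod p → MvPolynomial (Fin 4) F := fun x => C (ZMod.castHom (dvd_refl p) F x)
  letI al := c (g 0 0)
  letI be := c (g 0 1)
  letI ga := c (g 1 0)
  letI de := c (g 1 1)
  aeval ![
    de ^ 3 * X 0 + 3 * de ^ 2 * ga * X 1 + 3 * de * ga ^ 2 * X 2 + ga ^ 3 * X 3,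
    de ^ 2 * be * X 0 + (de ^ 2 * al + 2 * de * be * ga) * X 1
      + (2 * de * ga * al + be * ga ^ 2) * X 2 + ga ^ 2 * al * X 3,
    de * be ^ 2 * X 0 + (2 * de * be * al + be ^ 2 * ga) * X 1
      + (de * al ^ 2 + 2 * be * ga * al) * X 2 + ga * al ^ 2 * X 3,
    be ^ 3 * X 0 + 3 * be ^ 2 * al * X 1 + 3 * be * al ^ 2 * X 2 + al ^ 3 * X 3]

/-- The transfer with respect to the Sylow `p`-subgroup `P = ⟨σ⟩`,
`tr^P(f) = ∑_{τ ∈ P} (f)τ`, where the elements of `P` are the matrices `[[1,s],[0,1]]`. -/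
def trP (p : ℕ) [Fact p.Prime] (F : Type) [Field F] [CharP F p]
    (f : MvPolynomial (Fin 4) F) : MvPolynomial (Fin 4) F :=
  ∑ s : ZMod p, act p F !![1, s; 0, 1] f

/-- The relative transfer `tr_B^G(f) = ∑_{τ ∈ Q ∪ {η}} (f)τ`, using the coset
representatives `Q ∪ {η}` of the Borel subgroup `B` in `G = SL₂(F_p)`. -/
def trBG (p : ℕ) [Fact p.Prime] (F : Type) [Field F] [CharP F p]
    (f : MvPolynomial (Fin 4) F) : MvPolynomial (Fin 4) F :=
  (∑ s : ZMod p, act p F !![1, 0; s, 1] f) + act p F !![0, 1; -1, 0] f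

/-- The full transfer `tr^G(f) = ∑_{τ ∈ SL₂(F_p)} (f)τ`. -/
def trG (p : ℕ) [Fact p.Prime] (F : Type) [Field F] [CharP F p]
    (f : MvPolynomial (Fin 4) F) : MvPolynomial (Fin 4) F :=
  ∑ g : Matrix.SpecialLinearGroup (Fin 2) (ZMod p), act p F g.1 f

/-- `N = ∏_{τ ∈ P} (a₃)τ = ∏_{s ∈ F_p} (a₃ + 3s a₂ + 3s² a₁ + s³ a₀)`. -/
def Npoly (p : ℕ) [Fact p.Prime] (F : Type) [Field F] [CharP F p] :
    MvPolynomial (Fin 4) F :=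
  ∏ s : ZMod p, act p F !![1, s; 0, 1] (X 3)

/-- The weight of the monomial `a₃^e₃ a₂^e₂ a₁^e₁ a₀^e₀`, i.e. `3e₃ + e₂ - e₁ - 3e₀`. -/
def wt (d : Fin 4 →₀ ℕ) : ℤ :=
  3 * (d 3 : ℤ) + (d 2 : ℤ) - (d 1 : ℤ) - 3 * (d 0 : ℤ)

/-- `f` is isobaric of weight `lam` modulo `p - 1`: every monomial occurring in `f`
has weight congruent to `lam` modulo `p - 1`. -/
def Isobaric (p : ℕ) {F : Type} [Field F] (f : MvPolynomial (Fin 4) F) (lam : ℤ) : Prop :=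
  ∀ d ∈ f.support, ((p : ℤ) - 1) ∣ (wt d - lam)

/-- Strict grevlex comparison on exponent vectors, for the graded reverse
lexicographic order with `a₀ < a₁ < a₂ < a₃`. -/
def grevlexLt (d e : Fin 4 →₀ ℕ) : Prop :=
  (∑ i : Fin 4, d i) < (∑ i : Fin 4, e i) ∨
    ((∑ i : Fin 4, d i) = (∑ i : Fin 4, e i) ∧
      ∃ k : Fin 4, e k < d k ∧ ∀ j : Fin 4, j < k → d j = e j)

/-- `d` is the lead monomial of `f` in the grevlex order with `a₀ < a₁ < a₂ < a₃`. -/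
def LeadMonomialIs {F : Type} [Field F] (f : MvPolynomial (Fin 4) F) (d : Fin 4 →₀ ℕ) : Prop :=
  coeff d f ≠ 0 ∧ ∀ e ∈ f.support, e ≠ d → grevlexLt e d

/-- The lead term of `f` is `c · x^d` in the grevlex order with `a₀ < a₁ < a₂ < a₃`. -/
def LeadTermIs {F : Type} [Field F] (f : MvPolynomial (Fin 4) F) (c : F) (d : Fin 4 →₀ ℕ) :
    Prop :=
  LeadMonomialIs f d ∧ coeff d f = c

/-- The discriminant `D` of the binary cubic. -/
def Dpoly (F : Type) [Field F] : MvPolynomial (Fin 4) F :=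
  3 * X 2 ^ 2 * X 1 ^ 2 - 4 * X 3 * X 1 ^ 3 - 4 * X 2 ^ 3 * X 0
    + 6 * X 3 * X 2 * X 1 * X 0 - X 3 ^ 2 * X 0 ^ 2

/-- `K = -tr^G(a₁^{p-1})`. -/
def Kpoly (p : ℕ) [Fact p.Prime] (F : Type) [Field F] [CharP F p] :
    MvPolynomial (Fin 4) F :=
  - trG p F (X 1 ^ (p - 1))

/-- Dickson's invariant `L = 3(a₂^p a₁ - a₂ a₁^p) - (a₃^p a₀ - a₃ a₀^p)`. -/
def Lpoly (p : ℕ) (F : Type) [Field F] : MvPolynomial (Fin 4) F :=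
  3 * (X 2 ^ p * X 1 - X 2 * X 1 ^ p) - (X 3 ^ p * X 0 - X 3 * X 0 ^ p)

/-- `e = 2a₁³ + a₀(a₃a₀ - 3a₂a₁)`. -/
def epoly (F : Type) [Field F] : MvPolynomial (Fin 4) F :=
  2 * X 1 ^ 3 + X 0 * (X 3 * X 0 - 3 * X 2 * X 1)

/-- `d = a₁² - a₂a₀`. -/
def dpoly (F : Type) [Field F] : MvPolynomial (Fin 4) F :=
  X 1 ^ 2 - X 2 * X 0

/-- `ξ = 3a₂² - 4a₃a₁`. -/
def xipoly (F : Type) [Field F] : MvPolynomial (Fin 4) F :=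
  3 * X 2 ^ 2 - 4 * X 3 * X 1

/-- The ring of `SL₂(F_p)`-invariants `F[V]^{SL₂(F_p)}`, as a subalgebra of `F[V]`. -/
def invariants (p : ℕ) [Fact p.Prime] (F : Type) [Field F] [CharP F p] :
    Subalgebra F (MvPolynomial (Fin 4) F) where
  carrier := {f | ∀ g : Matrix.SpecialLinearGroup (Fin 2) (ZMod p), act p F g.1 f = f}
  mul_mem' := fun hf hg g => by rw [map_mul, hf g, hg g]
  one_mem' := fun g => map_one _
  add_mem' := fun hf hg g => by rw [map_add, hf g, hg g]
  zero_mem' := fun g => map_zero _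
  algebraMap_mem' := fun c g => (act _ _ _).commutes c

section Grevlex

variable {F : Type} [Field F]

/-- Grevlex as a lexicographic order: total degree first, then the exponent vectors in reversed
lexicographic order. -/
def grevlexKey (d : Fin 4 →₀ ℕ) : ℕ ×ₗ (Lex (Fin 4 → ℕ))ᵒᵈ :=
  toLex (∑ i, d i, OrderDual.toDual (toLex ⇑d))

theorem grevlexLt_iff {d e : Fin 4 →₀ ℕ} : grevlexLt d e ↔ grevlexKey d < grevlexKey e := by
  rw [grevlexKey, grevlexKey, Prod.Lex.toLex_lt_toLex, OrderDual.toDual_lt_toDual]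
  refine or_congr Iff.rfl (and_congr Iff.rfl (exists_congr fun k => ?_))
  exact and_comm.trans (and_congr (forall₂_congr fun j _ => eq_comm) Iff.rfl)

theorem grevlexKey_injective : Function.Injective grevlexKey := fun _ _ h =>
  DFunLike.coe_injective (congrArg (fun x => ofLex (OrderDual.ofDual (ofLex x).2)) h)

theorem grevlexKey_add (d e : Fin 4 →₀ ℕ) :
    grevlexKey (d + e) = grevlexKey d + grevlexKey e := by
  simp only [grevlexKey, Finsupp.coe_add, Pi.add_apply, Finset.sum_add_distrib]
  rfl

theorem grevlexLt_single_one {i j : Fin 4} (h : i < j) :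
    grevlexLt (Finsupp.single i 1) (Finsupp.single j 1) :=
  Or.inr ⟨by simp, i, by simp [h.ne'], fun k hk => by simp [hk.ne, (hk.trans h).ne]⟩

theorem leadTermIs_iff {f : MvPolynomial (Fin 4) F} {c : F} {d : Fin 4 →₀ ℕ} :
    LeadTermIs f c d ↔
      coeff d f = c ∧ c ≠ 0 ∧ ∀ e ∈ f.support, grevlexKey e ≤ grevlexKey d := by
  refine ⟨fun ⟨⟨hd, hlt⟩, hc⟩ => ⟨hc, hc ▸ hd, fun e he => ?_⟩,
    fun ⟨hc, hc0, hle⟩ => ⟨⟨hc ▸ hc0, fun e he hne => ?_⟩, hc⟩⟩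
  · obtain rfl | hne := eq_or_ne e d
    · exact le_rfl
    · exact (grevlexLt_iff.mp (hlt e he hne)).le
  · exact grevlexLt_iff.mpr ((hle e he).lt_of_ne (grevlexKey_injective.ne hne))

theorem LeadTermIs.mul {f g : MvPolynomial (Fin 4) F} {c c' : F} {a b : Fin 4 →₀ ℕ}
    (hf : LeadTermIs f c a) (hg : LeadTermIs g c' b) : LeadTermIs (f * g) (c * c') (a + b) := by
  rw [leadTermIs_iff] at hf hg ⊢
  obtain ⟨hfa, hc, hfle⟩ := hf
  obtain ⟨hgb, hc', hgle⟩ := hg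
  refine ⟨?_, mul_ne_zero hc hc', fun e he => ?_⟩
  · rw [coeff_mul, Finset.sum_eq_single (a, b), hfa, hgb]
    · rintro ⟨x, y⟩ hxy hne
      by_contra hxy0
      have hx : x ∈ f.support := mem_support_iff.mpr (left_ne_zero_of_mul hxy0)
      have hy : y ∈ g.support := mem_support_iff.mpr (right_ne_zero_of_mul hxy0)
      have hlt : grevlexKey (x + y) < grevlexKey (a + b) := by
        rw [grevlexKey_add, grevlexKey_add]
        obtain rfl | hxa := eq_or_ne x a
        · exact add_lt_add_of_le_of_lt le_rfl ((hgle y hy).lt_of_ne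
            (grevlexKey_injective.ne fun h => hne (by rw [h])))
        · exact add_lt_add_of_lt_of_le
            ((hfle x hx).lt_of_ne (grevlexKey_injective.ne hxa)) (hgle y hy)
      exact hlt.ne (by rw [Finset.HasAntidiagonal.mem_antidiagonal.mp hxy])
    · exact fun h => (h (Finset.HasAntidiagonal.mem_antidiagonal.mpr rfl)).elim
  · obtain ⟨x, hx, y, hy, rfl⟩ := Finset.mem_add.mp (support_mul f g he)
    rw [grevlexKey_add, grevlexKey_add]
    exact add_le_add (hfle x hx) (hgle y hy)

theorem leadTermIs_one : LeadTermIs (1 : MvPolynomial (Fin 4) F) 1 0 :=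
  leadTermIs_iff.mpr ⟨coeff_zero_one, one_ne_zero, fun e he => by
    rw [support_one, Finset.mem_singleton] at he; rw [he]⟩

theorem LeadTermIs.prod {ι : Type*} (s : Finset ι) {f : ι → MvPolynomial (Fin 4) F}
    {c : ι → F} {d : ι → Fin 4 →₀ ℕ} (h : ∀ i ∈ s, LeadTermIs (f i) (c i) (d i)) :
    LeadTermIs (∏ i ∈ s, f i) (∏ i ∈ s, c i) (∑ i ∈ s, d i) := by
  classical
  induction s using Finset.induction_on with
  | empty => exact leadTermIs_one
  | insert i s hi ih =>
    rw [Finset.prod_insert hi, Finset.prod_insert hi, Finset.sum_insert hi]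
    exact (h i (Finset.mem_insert_self i s)).mul
      (ih fun j hj => h j (Finset.mem_insert_of_mem hj))

theorem leadTermIs_monomial {c : F} (hc : c ≠ 0) (d : Fin 4 →₀ ℕ) :
    LeadTermIs (monomial d c) c d :=
  leadTermIs_iff.mpr ⟨by rw [coeff_monomial, if_pos rfl], hc, fun e he => by
    rw [Finset.mem_singleton.mp (support_monomial_subset he)]⟩

theorem leadTermIs_linear (a b c : F) :
    LeadTermIs (C a * X 0 + C b * X 1 + C c * X 2 + X 3 : MvPolynomial (Fin 4) F) 1
      (Finsupp.single 3 1) := by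
  have hcoeff : coeff (Finsupp.single 3 1)
      (C a * X 0 + C b * X 1 + C c * X 2 + X 3 : MvPolynomial (Fin 4) F) = 1 := by
    simp [coeff_X, Finsupp.single_eq_single_iff]
  refine ⟨⟨hcoeff ▸ one_ne_zero, fun e he hne => ?_⟩, hcoeff⟩
  rw [mem_support_iff] at he
  obtain rfl | rfl | rfl : e = Finsupp.single 0 1 ∨ e = Finsupp.single 1 1 ∨
      e = Finsupp.single 2 1 := by
    by_contra! h
    simp [coeff_X, Ne.symm h.1, Ne.symm h.2.1, Ne.symm h.2.2, Ne.symm hne] at he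
  all_goals exact grevlexLt_single_one (by decide)

end Grevlex

section SetZero

variable {σ R : Type*} [CommSemiring R] [DecidableEq σ]

def setZero (i : σ) : MvPolynomial σ R →ₐ[R] MvPolynomial σ R :=
  aeval (Function.update X i 0)

@[simp]
theorem setZero_X_self (i : σ) : setZero i (X i : MvPolynomial σ R) = 0 := by
  simp [setZero]

@[simp]
theorem setZero_X_of_ne {i j : σ} (h : j ≠ i) : setZero i (X j : MvPolynomial σ R) = X j := by
  simp [setZero, h]

theorem setZero_monomial (i : σ) (m : σ →₀ ℕ) (a : R) :
    setZero i (monomial m a) = if m i = 0 then monomial m a else 0 := by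
  rw [setZero, aeval_monomial, Finsupp.prod]
  split_ifs with hm
  · rw [monomial_eq, Finsupp.prod, algebraMap_eq]
    congr 1
    refine Finset.prod_congr rfl fun j hj => ?_
    rw [Function.update_of_ne fun h => Finsupp.mem_support_iff.mp hj (by rw [h]; exact hm)]
  · rw [Finset.prod_eq_zero (Finsupp.mem_support_iff.mpr hm), mul_zero]
    rw [Function.update_self, zero_pow hm]

theorem coeff_setZero (i : σ) (f : MvPolynomial σ R) (e : σ →₀ ℕ) :
    coeff e (setZero i f) = if e i = 0 then coeff e f else 0 := by
  induction f using MvPolynomial.induction_on' with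
  | monomial m a =>
    rw [setZero_monomial, apply_ite (coeff e), coeff_zero, coeff_monomial]
    obtain rfl | hme := eq_or_ne m e
    · rfl
    · simp [hme]
  | add f g hf hg => simp only [map_add, coeff_add, hf, hg]; split_ifs <;> simp

end SetZero

/-- A monomial containing `a₀` is grevlex-smaller than every `a₀`-free monomial of the same
degree. -/
theorem LeadTermIs.of_setZero_eq {F : Type} [Field F] {f g : MvPolynomial (Fin 4) F} {c : F}
    {d : Fin 4 →₀ ℕ} {n : ℕ} (hf : LeadTermIs f c d) (hd : d 0 = 0) (hg : g.IsHomogeneous n)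
    (hfg : setZero 0 g = setZero 0 f) : LeadTermIs g c d := by
  have hcoeff (e : Fin 4 →₀ ℕ) (he : e 0 = 0) : coeff e g = coeff e f := by
    simpa [coeff_setZero, he] using congrArg (coeff e) hfg
  obtain ⟨⟨hfd, hlt⟩, hc⟩ := hf
  rw [← hcoeff d hd] at hfd hc
  refine ⟨⟨hfd, fun e he hne => ?_⟩, hc⟩
  obtain he0 | he0 := eq_or_ne (e 0) 0
  · exact hlt e (by rw [mem_support_iff, ← hcoeff e he0]; exact mem_support_iff.mp he) hne
  · have hdeg : ∀ x ∈ g.support, ∑ i, x i = n := fun x hx => by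
      rw [← Finsupp.degree_eq_sum]
      by_contra h
      exact mem_support_iff.mp hx (hg.coeff_eq_zero h)
    refine Or.inr ⟨(hdeg e he).trans (hdeg d (mem_support_iff.mpr hfd)).symm, 0, ?_,
      fun j hj => absurd hj (Fin.not_lt_zero j)⟩
    rw [hd]
    exact Nat.pos_of_ne_zero he0

theorem natCast_ne_zero_of_lt {R : Type*} [AddMonoidWithOne R] {p : ℕ} [CharP R p] {n : ℕ}
    (hn : 0 < n) (hnp : n < p) : (n : R) ≠ 0 :=
  (CharP.cast_eq_zero_iff R p n).not.mpr (Nat.not_dvd_of_pos_of_lt hn hnp)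

section Action

variable {p : ℕ} [Fact p.Prime] {F : Type} [Field F] [CharP F p]

local notation "κ" => ZMod.castHom (dvd_refl p) F

theorem act_X0 (g : Matrix (Fin 2) (Fin 2) (ZMod p)) :
    act p F g (X 0) = C (κ (g 1 1) ^ 3) * X 0 + C (3 * κ (g 1 1) ^ 2 * κ (g 1 0)) * X 1
      + C (3 * κ (g 1 1) * κ (g 1 0) ^ 2) * X 2 + C (κ (g 1 0) ^ 3) * X 3 := by
  simp only [map_mul, map_pow, map_ofNat]
  simp [act]

theorem act_X1 (g : Matrix (Fin 2) (Fin 2) (ZMod p)) :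
    act p F g (X 1) = C (κ (g 1 1) ^ 2 * κ (g 0 1)) * X 0
      + C (κ (g 1 1) ^ 2 * κ (g 0 0) + 2 * κ (g 1 1) * κ (g 0 1) * κ (g 1 0)) * X 1
      + C (2 * κ (g 1 1) * κ (g 1 0) * κ (g 0 0) + κ (g 0 1) * κ (g 1 0) ^ 2) * X 2
      + C (κ (g 1 0) ^ 2 * κ (g 0 0)) * X 3 := by
  simp only [map_add, map_mul, map_pow, map_ofNat]
  simp [act]

theorem act_X2 (g : Matrix (Fin 2) (Fin 2) (ZMod p)) :
    act p F g (X 2) = C (κ (g 1 1) * κ (g 0 1) ^ 2) * X 0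
      + C (2 * κ (g 1 1) * κ (g 0 1) * κ (g 0 0) + κ (g 0 1) ^ 2 * κ (g 1 0)) * X 1
      + C (κ (g 1 1) * κ (g 0 0) ^ 2 + 2 * κ (g 0 1) * κ (g 1 0) * κ (g 0 0)) * X 2
      + C (κ (g 1 0) * κ (g 0 0) ^ 2) * X 3 := by
  simp only [map_add, map_mul, map_pow, map_ofNat]
  simp [act]

theorem act_X3 (g : Matrix (Fin 2) (Fin 2) (ZMod p)) :
    act p F g (X 3) = C (κ (g 0 1) ^ 3) * X 0 + C (3 * κ (g 0 1) ^ 2 * κ (g 0 0)) * X 1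
      + C (3 * κ (g 0 1) * κ (g 0 0) ^ 2) * X 2 + C (κ (g 0 0) ^ 3) * X 3 := by
  simp only [map_mul, map_pow, map_ofNat]
  simp [act]

theorem act_C (g : Matrix (Fin 2) (Fin 2) (ZMod p)) (a : F) : act p F g (C a) = C a :=
  (act p F g).commutes a

theorem act_one : act p F 1 = AlgHom.id F (MvPolynomial (Fin 4) F) := by
  ext i : 1
  fin_cases i <;> simp [act_X0, act_X1, act_X2, act_X3]

theorem act_mul (g h : Matrix (Fin 2) (Fin 2) (ZMod p)) :
    act p F (g * h) = (act p F h).comp (act p F g) := by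
  ext i : 1
  fin_cases i <;>
  simp only [Fin.reduceFinMk, AlgHom.comp_apply, act_X0, act_X1, act_X2, act_X3, map_add, map_mul,
    act_C, Matrix.mul_apply, Fin.sum_univ_two, map_pow, map_ofNat] <;> ring


theorem isHomogeneous_act_X (g : Matrix (Fin 2) (Fin 2) (ZMod p)) (i : Fin 4) :
    (act p F g (X i)).IsHomogeneous 1 := by
  have hlin (a b c d : F) :
      (C a * X 0 + C b * X 1 + C c * X 2 + C d * X 3 : MvPolynomial (Fin 4) F).IsHomogeneous 1 :=
    (((isHomogeneous_C_mul_X a 0).add (isHomogeneous_C_mul_X b 1)).add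
      (isHomogeneous_C_mul_X c 2)).add (isHomogeneous_C_mul_X d 3)
  fin_cases i <;> simp only [Fin.reduceFinMk, act_X0, act_X1, act_X2, act_X3] <;> exact hlin ..

theorem isHomogeneous_act {f : MvPolynomial (Fin 4) F} {n : ℕ} (hf : f.IsHomogeneous n)
    (g : Matrix (Fin 2) (Fin 2) (ZMod p)) : (act p F g f).IsHomogeneous n := by
  convert hf.aeval _ (isHomogeneous_act_X (F := F) g) using 1
  · exact DFunLike.congr_fun (aeval_unique (act p F g)) f
  · rw [one_mul]

theorem isHomogeneous_trBG {f : MvPolynomial (Fin 4) F} {n : ℕ} (hf : f.IsHomogeneous n) :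
    (trBG p F f).IsHomogeneous n :=
  (IsHomogeneous.sum _ _ _ fun _ _ => isHomogeneous_act hf _).add (isHomogeneous_act hf _)

theorem isHomogeneous_Npoly : (Npoly p F).IsHomogeneous p := by
  simpa [Npoly, ZMod.card] using IsHomogeneous.prod Finset.univ _ (fun _ => 1) fun s _ =>
    isHomogeneous_act (isHomogeneous_X F 3) !![1, s; 0, 1]

theorem isHomogeneous_trP_X3_pow (n : ℕ) : (trP p F (X 3 ^ n)).IsHomogeneous n := by
  simpa [trP] using IsHomogeneous.sum _ _ _ fun s _ =>
    isHomogeneous_act ((isHomogeneous_X F 3).pow n) !![1, s; 0, 1]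

theorem isHomogeneous_epoly : (epoly F).IsHomogeneous 3 := by
  have hX (i : Fin 4) : (X i : MvPolynomial (Fin 4) F).IsHomogeneous 1 := isHomogeneous_X F i
  have hC (a : F) : (C a : MvPolynomial (Fin 4) F).IsHomogeneous 0 := isHomogeneous_C _ a
  rw [epoly, ← map_ofNat C 2, ← map_ofNat C 3]
  exact ((hC 2).mul ((hX 1).pow 3)).add
    ((hX 0).mul (((hX 3).mul (hX 0)).sub (((hC 3).mul (hX 2)).mul (hX 1))))

theorem setZero_act_X3 {g : Matrix (Fin 2) (Fin 2) (ZMod p)} (hg : g 0 0 = 0) :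
    setZero 0 (act p F g (X 3)) = 0 := by
  simp [act_X3, hg]

/-- The factor `((a₃)σ_s)g = (a₃)(σ_s g)` of `(N)g` is a multiple of `a₀` once `(σ_s g)₀₀ = 0`. -/
theorem setZero_act_Npoly {g : Matrix (Fin 2) (Fin 2) (ZMod p)}
    (hg : ∃ s, g 0 0 + s * g 1 0 = 0) : setZero 0 (act p F g (Npoly p F)) = 0 := by
  obtain ⟨s, hs⟩ := hg
  rw [Npoly, map_prod, map_prod]
  refine Finset.prod_eq_zero (Finset.mem_univ s) ?_
  rw [← AlgHom.comp_apply (act p F g), ← act_mul]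
  exact setZero_act_X3 (by simpa [Matrix.mul_apply] using hs)

theorem setZero_trBG_Npoly_mul (f : MvPolynomial (Fin 4) F) :
    setZero 0 (trBG p F (Npoly p F * f)) = setZero 0 (Npoly p F * f) := by
  have hvanish (g : Matrix (Fin 2) (Fin 2) (ZMod p)) (hg : ∃ s, g 0 0 + s * g 1 0 = 0) :
      setZero 0 (act p F g (Npoly p F * f)) = 0 := by
    rw [map_mul, map_mul, setZero_act_Npoly hg, zero_mul]
  rw [trBG, map_add, map_sum, Finset.sum_eq_single (0 : ZMod p),
    hvanish !![0, 1; -1, 0] ⟨0, by simp⟩, add_zero, ← Matrix.one_fin_two, act_one, AlgHom.id_apply]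
  · exact fun t _ ht => hvanish _ ⟨-t⁻¹, by simp [ht]⟩
  · exact fun h => (h (Finset.mem_univ 0)).elim

theorem leadTermIs_Npoly : LeadTermIs (Npoly p F) 1 (Finsupp.single 3 p) := by
  have h := LeadTermIs.prod Finset.univ fun s _ =>
    leadTermIs_linear (F := F) (κ s ^ 3) (3 * κ s ^ 2) (3 * κ s)
  simp only [Finset.prod_const_one, Finset.sum_const, Finset.card_univ, ZMod.card,
    Finsupp.smul_single, smul_eq_mul, mul_one] at h
  convert h using 1
  exact Finset.prod_congr rfl fun s _ => by simp [act_X3]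

theorem leadTermIs_epoly (h2 : (2 : F) ≠ 0) : LeadTermIs (epoly F) 2 (Finsupp.single 1 3) :=
  (leadTermIs_monomial h2 _).of_setZero_eq (by simp) isHomogeneous_epoly <| by
    simp [epoly, ← C_mul_X_pow_eq_monomial, map_ofNat]

theorem act_upper_X3 (s : ZMod p) :
    act p F !![1, s; 0, 1] (X 3) = ∑ i, ![κ s ^ 3, 3 * κ s ^ 2, 3 * κ s, 1] i • X i := by
  simp [act_X3, Fin.sum_univ_four, smul_eq_C_mul]

theorem sum_castHom_pow_eq_zero {m : ℕ} (hm : m < p - 1) : ∑ s : ZMod p, κ s ^ m = 0 := by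
  simp_rw [← map_pow, ← map_sum,
    FiniteField.sum_pow_lt_card_sub_one (ZMod p) m (by rwa [ZMod.card]), map_zero]

theorem sum_castHom_pow_card_sub_one : ∑ s : ZMod p, κ s ^ (p - 1) = -1 := by
  simp_rw [← map_pow, ← map_sum, ZMod.pow_card_sub_one]
  simp [Finset.sum_ite, Finset.filter_ne', Nat.cast_sub (Fact.out : p.Prime).one_le]

theorem coeff_trP_X3_pow (n : ℕ) (e : Fin 4 →₀ ℕ) :
    coeff e (trP p F (X 3 ^ n)) = if ∑ i, e i = n then
      e.multinomial * 3 ^ (e 1 + e 2) * ∑ s : ZMod p, κ s ^ (3 * e 0 + 2 * e 1 + e 2) else 0 := by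
  simp_rw [trP, coeff_sum, map_pow, act_upper_X3, coeff_linearCombination_X_pow_of_fintype]
  rw [Finsupp.sum_fintype _ _ (fun _ => rfl)]
  simp_rw [Finsupp.prod_fintype _ _ (fun _ => pow_zero _)]
  split_ifs
  · rw [Finset.mul_sum]
    refine Finset.sum_congr rfl fun s _ => ?_
    simp only [Fin.prod_univ_four, Matrix.cons_val_zero, Matrix.cons_val_one, Matrix.cons_val,
      one_pow, mul_one]
    ring
  · simp

theorem mem_support_trP_X3_pow {n : ℕ} {e : Fin 4 →₀ ℕ} (he : e ∈ (trP p F (X 3 ^ n)).support) :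
    ∑ i, e i = n ∧ p - 1 ≤ 3 * e 0 + 2 * e 1 + e 2 := by
  rw [mem_support_iff, coeff_trP_X3_pow] at he
  split_ifs at he with hdeg
  · refine ⟨hdeg, not_lt.mp fun hlt => he ?_⟩
    rw [sum_castHom_pow_eq_zero hlt, mul_zero]
  · exact absurd rfl he

theorem leadTermIs_trP_X3_pow (hp : 3 < p) :
    LeadTermIs (trP p F (X 3 ^ (p - 2))) (2 / 3)
      (Finsupp.single 2 (p - 3) + Finsupp.single 1 1) := by
  set d : Fin 4 →₀ ℕ := Finsupp.single 2 (p - 3) + Finsupp.single 1 1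
  have hd : d 0 = 0 ∧ d 1 = 1 ∧ d 2 = p - 3 ∧ d 3 = 0 := by simp [d]
  have hdeg : ∑ i, d i = p - 2 := by rw [Fin.sum_univ_four]; omega
  have h2 : (2 : F) ≠ 0 := by exact_mod_cast natCast_ne_zero_of_lt (R := F) two_pos (by omega)
  have h3 : (3 : F) ≠ 0 := by exact_mod_cast natCast_ne_zero_of_lt (R := F) three_pos hp
  have hcoeff : coeff d (trP p F (X 3 ^ (p - 2))) = 2 / 3 := by
    have hmult : d.multinomial = p - 2 := by
      rw [Finsupp.multinomial_eq_of_support_subset (s := {1, 2}),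
        Nat.binomial_eq_choose (by decide)]
      · rw [hd.2.1, hd.2.2.1, Nat.choose_one_right]
        omega
      · intro i hi
        fin_cases i <;> simp_all [d]
    have hfermat : (3 : F) ^ (p - 2) * 3 = 1 := by
      have h := congrArg κ
        (ZMod.pow_card_sub_one_eq_one (by exact_mod_cast natCast_ne_zero_of_lt three_pos hp))
      rwa [map_pow, map_ofNat, map_one, show p - 1 = p - 2 + 1 by omega, pow_succ] at h
    rw [coeff_trP_X3_pow, if_pos hdeg, hmult, hd.1, hd.2.1, hd.2.2.1,
      show 3 * 0 + 2 * 1 + (p - 3) = p - 1 by omega, sum_castHom_pow_card_sub_one,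
      show 1 + (p - 3) = p - 2 by omega, eq_div_iff h3, Nat.cast_sub (by omega),
      CharP.cast_eq_zero]
    linear_combination 2 * hfermat
  refine ⟨⟨hcoeff ▸ div_ne_zero h2 h3, fun e he hne => ?_⟩, hcoeff⟩
  obtain ⟨hdeg_e, hexp⟩ := mem_support_trP_X3_pow he
  refine Or.inr ⟨hdeg_e.trans hdeg.symm, ?_⟩
  rw [Fin.sum_univ_four] at hdeg_e
  -- `hexp` forces `e 1 ≥ 1` when `e 0 = 0`, and `e 1 = 1` then forces `e = d`.
  by_cases he0 : e 0 = 0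
  · by_cases he1 : e 1 = 1
    · refine absurd (Finsupp.ext fun i => ?_) hne
      fin_cases i <;> simp only [Fin.reduceFinMk] <;> omega
    · exact ⟨1, by omega, fun j hj => by rw [show j = 0 by omega]; omega⟩
  · exact ⟨0, by omega, fun j hj => absurd hj (Fin.not_lt_zero j)⟩

end Action

/-- the lead term of `tr_B^G(N·e)` (grevlex, `a₀ < a₁ < a₂ < a₃`) is
`2 a₃^p a₁³`, and the lead term of `tr_B^G(N·tr^P(a₃^{p-2}))` is `(2/3) a₃^p a₂^{p-3} a₁`. -/
theorem leadterms (p : ℕ) [Fact p.Prime] (hp : 3 < p)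
    (F : Type) [Field F] [CharP F p] :
    LeadTermIs (trBG p F (Npoly p F * epoly F)) 2
      (Finsupp.single 3 p + Finsupp.single 1 3) ∧
    LeadTermIs (trBG p F (Npoly p F * trP p F (X 3 ^ (p - 2)))) (2 / 3 : F)
      (Finsupp.single 3 p + Finsupp.single 2 (p - 3) + Finsupp.single 1 1) := by
  have h2 : (2 : F) ≠ 0 := by exact_mod_cast natCast_ne_zero_of_lt (R := F) two_pos (by omega)
  constructor
  · have hNe := leadTermIs_Npoly.mul (leadTermIs_epoly h2)
    rw [one_mul] at hNe
    exact hNe.of_setZero_eq (by simp)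
      (isHomogeneous_trBG (isHomogeneous_Npoly.mul isHomogeneous_epoly))
      (setZero_trBG_Npoly_mul _)
  · have hNW := leadTermIs_Npoly.mul (leadTermIs_trP_X3_pow (F := F) hp)
    rw [one_mul, ← add_assoc] at hNW
    exact hNW.of_setZero_eq (by simp)
      (isHomogeneous_trBG (isHomogeneous_Npoly.mul (isHomogeneous_trP_X3_pow _)))
      (setZero_trBG_Npoly_mul _)
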